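/- Let A be an abelian group and x an automorphism of A of finite order q such that [A,ₙx] = 1 for some n ≥ 1 (i.e., the iterated commutator [a, n copies of x] is trivial for all a ∈ A). Then x acts trivially on the subgroup A^(q^(n-1)) of q^(n-1)-th powers, i.e., [a^(q^(n-1)), x] = 1 for all a ∈ A. -/

import Mathlib

/-- Iterated commutator of an element with an automorphism:
`aengel x a 0 = a`, `aengel x a (i+1) = (aengel x a i)⁻¹ * x (aengel x a i)`. -/
def aengel {A : Type*} [Group A] (x : A ≃* A) (a : A) : ℕ → A
  | 0 => a
  | n + 1 => (aengel x a n)⁻¹ * x (aengel x a n)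

/-- Casolo's lemma: if `A` is abelian, `x` is an automorphism of `A` of finite order `q`
with `[A,ₙx] = 1`, then `x` fixes all `q^(n-1)`-th powers. -/
theorem casolo {A : Type*} [CommGroup A] (x : A ≃* A) (q n : ℕ) (hn : 1 ≤ n)
    (hq : orderOf x = q) (hq1 : 1 ≤ q)
    (hE : ∀ a : A, aengel x a n = 1) :
    ∀ a : A, x (a ^ q ^ (n - 1)) = a ^ q ^ (n - 1) := by
  set B := Additive A
  set Y : AddMonoid.End B := AddEquiv.toAddMonoidHom (MulEquiv.toAdditive x) with hY
  set t : AddMonoid.End B := Y - 1 with ht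
  have hYapp : ∀ b : B, Y b = Additive.ofMul (x (Additive.toMul b)) := fun b => rfl
  have htapp : ∀ a : A, t (Additive.ofMul a) = Additive.ofMul (a⁻¹ * x a) := by
    intro a
    have h : t (Additive.ofMul a) = Y (Additive.ofMul a) - Additive.ofMul a := rfl
    rw [h, hYapp]
    rw [ofMul_mul, ofMul_inv, sub_eq_neg_add]
    rfl
  -- x ^ q = 1
  have hxq : x ^ q = 1 := by rw [← hq]; exact pow_orderOf_eq_one x
  have hpow : ∀ (k : ℕ) (b : B), (Y ^ k) b = Additive.ofMul ((x ^ k) (Additive.toMul b)) := by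
    intro k
    induction k with
    | zero => intro b; simp
    | succ k ih =>
      intro b
      rw [pow_succ, AddMonoid.End.coe_mul, Function.comp_apply, ih, pow_succ]
      rfl
  have hYq : Y ^ q = 1 := by
    refine DFunLike.ext _ _ fun b => ?_
    rw [hpow, hxq]
    rfl
  have hX1 : t + 1 = Y := sub_add_cancel Y 1
  -- polynomial divisibility
  obtain ⟨Q, hQ⟩ : (Polynomial.X : Polynomial ℤ) ^ 2 ∣
      ((Polynomial.X + 1) ^ q - 1 - Polynomial.C (q : ℤ) * Polynomial.X) := by
    rw [Polynomial.X_pow_dvd_iff]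
    intro d hd
    interval_cases d <;>
      simp [Polynomial.coeff_X_add_one_pow, Polynomial.coeff_one, Nat.choose_one_right]
  have hev := congrArg (Polynomial.aeval t) hQ
  simp only [map_sub, map_add, map_pow, map_mul, map_one, map_natCast, Polynomial.aeval_X,
    Polynomial.aeval_C, algebraMap_int_eq, eq_intCast, Int.cast_natCast] at hev
  rw [hX1, hYq] at hev
  rw [sub_self, zero_sub] at hev
  -- hev : -(q * t) = t^2 * aeval t Q
  have hqt : (q : AddMonoid.End B) * t = t ^ 2 * (-(Polynomial.aeval t Q)) := by
    rw [← neg_neg ((q : AddMonoid.End B) * t), hev]; exact (mul_neg _ _).symm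
  have hc0 : Commute t (Polynomial.aeval t Q) := by
    have h := (Commute.all (Polynomial.X : Polynomial ℤ) Q).map (Polynomial.aeval t).toRingHom
    simpa using h
  set g : AddMonoid.End B := -(Polynomial.aeval t Q) with hg
  have hcomm : Commute t g := hc0.neg_right
  have key : ∀ k : ℕ, (q : AddMonoid.End B) ^ k * t = t ^ (k + 1) * g ^ k := by
    intro k
    induction k with
    | zero => simp
    | succ k ih =>
      calc (q : AddMonoid.End B) ^ (k + 1) * t
          = (q : AddMonoid.End B) ^ k * ((q : AddMonoid.End B) * t) := by
            rw [pow_succ, mul_assoc]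
        _ = (q : AddMonoid.End B) ^ k * (t * (t * g)) := by
            rw [hqt]; noncomm_ring
        _ = ((q : AddMonoid.End B) ^ k * t) * (t * g) := by noncomm_ring
        _ = (t ^ (k + 1) * g ^ k) * (t * g) := by rw [ih]
        _ = t ^ (k + 1) * ((g ^ k * t) * g) := by noncomm_ring
        _ = t ^ (k + 1) * ((t * g ^ k) * g) := by rw [← (hcomm.pow_right k).eq]
        _ = t ^ (k + 1 + 1) * g ^ (k + 1) := by noncomm_ring
  -- relate aengel to t powers
  have haeng : ∀ (k : ℕ) (a : A), (t ^ k) (Additive.ofMul a) = Additive.ofMul (aengel x a k) := by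
    intro k
    induction k with
    | zero => intro a; simp [aengel]
    | succ k ih =>
      intro a
      rw [pow_succ', AddMonoid.End.coe_mul, Function.comp_apply, ih, htapp]
      rfl
  have h1 : ∀ b : B, (t ^ n) b = 0 := by
    intro b
    have h := haeng n (Additive.toMul b)
    rw [hE] at h
    simpa using h
  intro a
  have h2 : ((q : AddMonoid.End B) ^ (n - 1) * t) (Additive.ofMul a) = 0 := by
    rw [key (n - 1), Nat.sub_add_cancel hn, AddMonoid.End.coe_mul, Function.comp_apply]
    exact h1 _
  rw [AddMonoid.End.coe_mul, Function.comp_apply] at h2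
  rw [show ((q : AddMonoid.End B) ^ (n - 1)) = ((q ^ (n - 1) : ℕ) : AddMonoid.End B) by
    rw [Nat.cast_pow]] at h2
  rw [AddMonoid.End.natCast_apply, ← map_nsmul] at h2
  have hsm : (q ^ (n - 1)) • (Additive.ofMul a) = Additive.ofMul (a ^ q ^ (n - 1)) :=
    (ofMul_pow _ _).symm
  rw [hsm, htapp] at h2
  have h3 : (a ^ q ^ (n - 1))⁻¹ * x (a ^ q ^ (n - 1)) = 1 := h2
  exact (inv_mul_eq_one.mp h3).symm
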